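/- Random-walk structure of the Chebyshev expansion of the exponential: for j ∈ ℕ let q(j) = e^{−1/2} 2^{−j} / j! (the Poisson distribution with mean 1/2), and for r, r′ ∈ ℤ define p(r′|r) = ∑_{j=0}^{∞} q(j) · 2^{−j} · binom(j, (j + r′ − r)/2), where the binomial coefficient is taken to be 0 unless (j + r′ − r)/2 is an integer between 0 and j. Then: (i) p(r′|r) ≥ 0 and ∑_{r′∈ℤ} p(r′|r) = 1; (ii) p(r+s|r) = p(r−s|r) for every s ∈ ℤ (symmetry about r); (iii) ∑_{r′∈ℤ} (r′ − r)² p(r′|r) = 1/2 (variance 1/2); and (iv) for every x ∈ [−1, 1] and r ∈ ℤ, e^{−(1−x)/2} T_r(x) = ∑_{r′∈ℤ} p(r′|r) T_{r′}(x), the series converging absolutely. -/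

import Mathlib

/-!
`p(·|r)` is the law of the endpoint of a `±1` random walk started at `r` whose number of steps
is Poisson with mean `1/2`: a path of `j` steps, `s` of them upwards, has probability
`q(j) 2^{-j} binom(j, s)` and ends at `r + 2s - j`. Every claim is a sum over paths, summed
first over `s` for fixed `j`. By Pascal's rule `∑_s binom(j, s) h(c + 2s - j) = μ^j h(c)`
whenever `h(c - 1) + h(c + 1) = μ h(c)`; the Chebyshev recurrence `T_{c-1} + T_{c+1} = 2x T_c`
turns the row sums into `(2x)^j T_r(x)`, and `∑_j q(j) x^j = e^{-(1-x)/2}`. The same recursion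
gives `∑_s binom(j, s) (2s - j)^2 = j 2^j`, so the variance is the mean `1/2` of the number of
steps; symmetry is `binom(j, s) = binom(j, j - s)`.
-/

namespace Paper

/-- The Chebyshev polynomial function of the first kind with integer index,
`T_r(x) = cos(r arccos x)` on `[-1, 1]`. -/
noncomputable def chebFun (r : ℤ) (x : ℝ) : ℝ := Real.cos (r * Real.arccos x)

/-- The Poisson distribution with mean `1/2`: `q(j) = e^{-1/2} 2^{-j} / j!`. -/
noncomputable def poissonWeight (j : ℕ) : ℝ :=
  Real.exp (-(1 / 2)) * (2 : ℝ)⁻¹ ^ j / (j.factorial : ℝ)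

/-- `binom(j, (j+t)/2)`, taken to be `0` unless `(j+t)/2` is an integer between `0`
and `j`. -/
noncomputable def halfBinom (j : ℕ) (t : ℤ) : ℝ :=
  ∑ s ∈ Finset.range (j + 1), if (j : ℤ) + t = 2 * (s : ℤ) then (j.choose s : ℝ) else 0

/-- The random-walk kernel `p(r'|r) = ∑_j q(j) 2^{-j} binom(j, (j+r'-r)/2)`. -/
noncomputable def rwKernel (r' r : ℤ) : ℝ :=
  ∑' j : ℕ, poissonWeight j * (2 : ℝ)⁻¹ ^ j * halfBinom j (r' - r)

open Finset

theorem sum_range_choose_succ_mul_shift {R : Type*} [NonAssocSemiring R] (h : ℤ → R) (c : ℤ)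
    (j : ℕ) :
    ∑ s ∈ range (j + 2), ((j + 1).choose s : R) * h (c + 2 * s - (j + 1 : ℕ)) =
      ∑ s ∈ range (j + 1), (j.choose s : R) * h (c - 1 + 2 * s - j) +
        ∑ s ∈ range (j + 1), (j.choose s : R) * h (c + 1 + 2 * s - j) := by
  convert sum_choose_succ_mul (fun i k => h (c + i - k)) j using 3 with s hs s hs s hs <;>
    have := mem_range.1 hs <;> rw [Nat.cast_sub (by omega)] <;> push_cast <;> ring_nf

theorem sum_range_choose_mul_of_add_eq_mul {R : Type*} [CommSemiring R] {h : ℤ → R} {μ : R}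
    (hh : ∀ c, h (c - 1) + h (c + 1) = μ * h c) (c : ℤ) (j : ℕ) :
    ∑ s ∈ range (j + 1), (j.choose s : R) * h (c + 2 * s - j) = μ ^ j * h c := by
  induction j generalizing c with
  | zero => simp
  | succ j ih =>
    rw [sum_range_choose_succ_mul_shift, ih, ih, ← mul_add, hh, pow_succ, mul_assoc]

theorem sum_range_choose_mul_sub_sq (r c : ℤ) (j : ℕ) :
    ∑ s ∈ range (j + 1), (j.choose s : ℝ) * (((c + 2 * s - j) - r : ℤ) : ℝ) ^ 2 =
      2 ^ j * (j + ((c - r : ℤ) : ℝ) ^ 2) := by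
  induction j generalizing c with
  | zero => simp
  | succ j ih =>
    rw [sum_range_choose_succ_mul_shift (fun n : ℤ => ((n - r : ℤ) : ℝ) ^ 2), ih, ih]
    push_cast
    ring

theorem chebFun_sub_one_add_chebFun_add_one {x : ℝ} (hx₁ : -1 ≤ x) (hx₂ : x ≤ 1) (c : ℤ) :
    chebFun (c - 1) x + chebFun (c + 1) x = 2 * x * chebFun c x := by
  simp only [chebFun, Int.cast_sub, Int.cast_add, Int.cast_one, sub_mul, add_mul, one_mul,
    Real.cos_sub, Real.cos_add, Real.cos_arccos hx₁ hx₂]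
  ring

theorem poissonWeight_nonneg (j : ℕ) : 0 ≤ poissonWeight j := by
  unfold poissonWeight
  positivity

theorem hasSum_poissonWeight_mul_pow (y : ℝ) :
    HasSum (fun j => poissonWeight j * y ^ j) (Real.exp ((y - 1) / 2)) := by
  have hexp : HasSum (fun j => (y / 2) ^ j / j.factorial) (Real.exp (y / 2)) := by
    rw [Real.exp_eq_exp_ℝ]
    exact NormedSpace.expSeries_div_hasSum_exp _
  rw [show (y - 1) / 2 = -(1 / 2) + y / 2 by ring, Real.exp_add]
  refine (hexp.mul_left _).congr_fun fun j => ?_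
  rw [poissonWeight, div_pow, inv_pow]
  ring

theorem poissonWeight_succ_mul (j : ℕ) :
    poissonWeight (j + 1) * ((j : ℝ) + 1) = poissonWeight j / 2 := by
  rw [poissonWeight, poissonWeight, Nat.factorial_succ]
  push_cast
  field_simp
  ring

theorem hasSum_poissonWeight_mul_self : HasSum (fun j => poissonWeight j * j) (1 / 2) := by
  rw [← hasSum_nat_add_iff' 1]
  simpa [poissonWeight_succ_mul] using (hasSum_poissonWeight_mul_pow 1).div_const 2

/-- A path of `p.1` steps `±1`, `p.2` of them upwards, weighted by its probability; started at
`r` it ends at `pathEnd r p`. -/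
noncomputable def pathWeight (p : ℕ × ℕ) : ℝ :=
  poissonWeight p.1 * 2⁻¹ ^ p.1 * p.1.choose p.2

def pathEnd (r : ℤ) (p : ℕ × ℕ) : ℤ := r + 2 * p.2 - p.1

theorem pathWeight_nonneg (p : ℕ × ℕ) : 0 ≤ pathWeight p := by
  have := poissonWeight_nonneg p.1
  unfold pathWeight
  positivity

section PathSums

variable (r : ℤ) (g : ℤ → ℝ) {a : ℕ → ℝ}

theorem hasSum_pathWeight_mul_row (j : ℕ) :
    HasSum (fun s => pathWeight (j, s) * g (pathEnd r (j, s)))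
      (poissonWeight j * 2⁻¹ ^ j * ∑ s ∈ range (j + 1), (j.choose s : ℝ) * g (r + 2 * s - j)) := by
  rw [mul_sum]
  convert hasSum_sum_of_ne_finset_zero (L := .unconditional ℕ) fun s hs => ?_ using 2 with s
  · simp only [pathWeight, pathEnd, mul_assoc]
  · simp [pathWeight, Nat.choose_eq_zero_of_lt (by simpa [Nat.lt_succ_iff] using hs)]

variable {r g}

theorem hasSum_pathWeight_mul_row_of_eq {j : ℕ} {b : ℝ}
    (hrow : ∑ s ∈ range (j + 1), (j.choose s : ℝ) * g (r + 2 * s - j) = 2 ^ j * b) :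
    HasSum (fun s => pathWeight (j, s) * g (pathEnd r (j, s))) (poissonWeight j * b) := by
  convert hasSum_pathWeight_mul_row r g j using 1
  rw [hrow, mul_assoc, ← mul_assoc (2⁻¹ ^ j), ← mul_pow, inv_mul_cancel₀ two_ne_zero, one_pow,
    one_mul]

theorem summable_pathWeight_mul_of_nonneg (hg : ∀ n, 0 ≤ g n)
    (hrow : ∀ j, ∑ s ∈ range (j + 1), (j.choose s : ℝ) * g (r + 2 * s - j) = 2 ^ j * a j)
    (ha : Summable fun j => poissonWeight j * a j) :
    Summable fun p => pathWeight p * g (pathEnd r p) := by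
  have row j := hasSum_pathWeight_mul_row_of_eq (hrow j)
  exact (summable_prod_of_nonneg fun p => mul_nonneg (pathWeight_nonneg p) (hg _)).2
    ⟨fun j => (row j).summable, ha.congr fun j => (row j).tsum_eq.symm⟩

theorem hasSum_pathWeight_mul {A : ℝ} (hg : Summable fun p => pathWeight p * g (pathEnd r p))
    (hrow : ∀ j, ∑ s ∈ range (j + 1), (j.choose s : ℝ) * g (r + 2 * s - j) = 2 ^ j * a j)
    (ha : HasSum (fun j => poissonWeight j * a j) A) :
    HasSum (fun p => pathWeight p * g (pathEnd r p)) A :=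
  (hg.hasSum.prod_fiberwise fun j => hasSum_pathWeight_mul_row_of_eq (hrow j)).unique ha ▸ hg.hasSum

end PathSums

theorem sum_range_choose_real (j : ℕ) : ∑ s ∈ range (j + 1), (j.choose s : ℝ) = 2 ^ j := by
  exact_mod_cast Nat.sum_range_choose j

theorem summable_pathWeight : Summable pathWeight := by
  simpa using summable_pathWeight_mul_of_nonneg (r := 0) (g := fun _ => 1) (a := fun _ => 1)
    (fun _ => zero_le_one) (fun j => by simpa using sum_range_choose_real j)
    (by simpa using (hasSum_poissonWeight_mul_pow 1).summable)

theorem summable_pathWeight_mul_of_abs_le_one (r : ℤ) {g : ℤ → ℝ} (hg : ∀ n, |g n| ≤ 1) :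
    Summable fun p => pathWeight p * g (pathEnd r p) :=
  summable_pathWeight.of_norm_bounded fun p => by
    rw [norm_mul, Real.norm_of_nonneg (pathWeight_nonneg p)]
    exact mul_le_of_le_one_right (pathWeight_nonneg p) (hg _)

theorem halfBinom_sub_eq_sum (j : ℕ) (r r' : ℤ) :
    halfBinom j (r' - r) =
      ∑ s ∈ range (j + 1), (j.choose s : ℝ) * if r + 2 * s - j = r' then 1 else 0 := by
  refine sum_congr rfl fun s _ => ?_
  rw [mul_ite, mul_one, mul_zero]
  exact if_congr (by omega) rfl rfl

theorem rwKernel_eq_tsum (r r' : ℤ) :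
    rwKernel r' r = ∑' p, pathWeight p * if pathEnd r p = r' then 1 else 0 := by
  let δ : ℤ → ℝ := fun n => if n = r' then 1 else 0
  have hsum : Summable fun p => pathWeight p * δ (pathEnd r p) :=
    summable_pathWeight_mul_of_abs_le_one r fun n => by unfold δ; split_ifs <;> norm_num
  rw [rwKernel, ← (hsum.hasSum.prod_fiberwise (hasSum_pathWeight_mul_row r δ)).tsum_eq]
  exact tsum_congr fun j => by rw [halfBinom_sub_eq_sum, mul_assoc]

theorem rwKernel_nonneg (r' r : ℤ) : 0 ≤ rwKernel r' r := by
  rw [rwKernel_eq_tsum]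
  exact tsum_nonneg fun p => mul_nonneg (pathWeight_nonneg p) (by split_ifs <;> norm_num)

theorem hasSum_rwKernel_mul (r : ℤ) (g : ℤ → ℝ) {A : ℝ}
    (h : HasSum (fun p => pathWeight p * g (pathEnd r p)) A) :
    HasSum (fun r' => rwKernel r' r * g r') A := by
  refine (h.tsum_fiberwise (pathEnd r)).congr_fun fun r' => ?_
  rw [_root_.tsum_subtype (pathEnd r ⁻¹' {r'}) fun p => pathWeight p * g (pathEnd r p),
    rwKernel_eq_tsum, ← tsum_mul_right]
  refine tsum_congr fun p => ?_
  by_cases hp : pathEnd r p = r' <;> simp [hp, Set.indicator]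

theorem halfBinom_neg (j : ℕ) (t : ℤ) : halfBinom j (-t) = halfBinom j t := by
  rw [halfBinom, ← sum_range_reflect]
  refine sum_congr rfl fun s hs => ?_
  have hs := mem_range.1 hs
  rw [Nat.add_sub_cancel, Nat.choose_symm (by omega)]
  exact if_congr (by omega) rfl rfl

theorem rwKernel_add_eq_sub (r s : ℤ) : rwKernel (r + s) r = rwKernel (r - s) r := by
  simp only [rwKernel, add_sub_cancel_left, sub_sub_cancel_left, halfBinom_neg]

theorem hasSum_rwKernel (r : ℤ) : HasSum (fun r' => rwKernel r' r) 1 := by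
  let one : ℤ → ℝ := fun _ => 1
  have hrow (j : ℕ) : ∑ s ∈ range (j + 1), (j.choose s : ℝ) * one (r + 2 * s - j) = 2 ^ j * 1 := by
    simpa [one] using sum_range_choose_real j
  have hpath := hasSum_pathWeight_mul
    (summable_pathWeight_mul_of_abs_le_one r (g := one) fun _ => by simp [one]) hrow
    (by simpa using hasSum_poissonWeight_mul_pow 1)
  simpa [one] using hasSum_rwKernel_mul r one hpath

theorem hasSum_sq_mul_rwKernel (r : ℤ) :
    HasSum (fun r' : ℤ => ((r' - r : ℤ) : ℝ) ^ 2 * rwKernel r' r) (1 / 2) := by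
  let sq : ℤ → ℝ := fun n => ((n - r : ℤ) : ℝ) ^ 2
  have hrow (j : ℕ) : ∑ s ∈ range (j + 1), (j.choose s : ℝ) * sq (r + 2 * s - j) = 2 ^ j * j := by
    simpa [sq] using sum_range_choose_mul_sub_sq r r j
  have hsum := summable_pathWeight_mul_of_nonneg (g := sq) (fun _ => sq_nonneg _) hrow
    hasSum_poissonWeight_mul_self.summable
  have hpath := hasSum_pathWeight_mul hsum hrow hasSum_poissonWeight_mul_self
  exact (hasSum_rwKernel_mul r sq hpath).congr_fun fun r' => mul_comm _ _

theorem hasSum_rwKernel_mul_chebFun {x : ℝ} (hx₁ : -1 ≤ x) (hx₂ : x ≤ 1) (r : ℤ) :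
    HasSum (fun r' => rwKernel r' r * chebFun r' x) (Real.exp (-(1 - x) / 2) * chebFun r x) := by
  let T : ℤ → ℝ := fun n => chebFun n x
  have hrow (j : ℕ) : ∑ s ∈ range (j + 1), (j.choose s : ℝ) * T (r + 2 * s - j) =
      2 ^ j * (x ^ j * T r) := by
    rw [sum_range_choose_mul_of_add_eq_mul (chebFun_sub_one_add_chebFun_add_one hx₁ hx₂), mul_pow,
      mul_assoc]
  refine hasSum_rwKernel_mul r T (hasSum_pathWeight_mul
    (summable_pathWeight_mul_of_abs_le_one r fun n => Real.abs_cos_le_one _) hrow ?_)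
  rw [show -(1 - x) / 2 = (x - 1) / 2 by ring]
  exact ((hasSum_poissonWeight_mul_pow x).mul_right (T r)).congr_fun fun j => by ring

/-- **Random-walk structure of the Chebyshev expansion of the exponential**: the kernel
`p(r'|r)` is a probability distribution in `r'`, symmetric about `r`, of variance `1/2`,
and for every `x ∈ [-1,1]` and `r ∈ ℤ`,
`e^{-(1-x)/2} T_r(x) = ∑_{r'} p(r'|r) T_{r'}(x)`, the series converging absolutely. -/
theorem random_walk_chebyshev_expansion :
    (∀ r r' : ℤ, 0 ≤ rwKernel r' r) ∧
    (∀ r : ℤ, HasSum (fun r' : ℤ => rwKernel r' r) 1) ∧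
    (∀ r s : ℤ, rwKernel (r + s) r = rwKernel (r - s) r) ∧
    (∀ r : ℤ, HasSum (fun r' : ℤ => ((r' - r : ℤ) : ℝ) ^ 2 * rwKernel r' r) (1 / 2)) ∧
    (∀ x : ℝ, -1 ≤ x → x ≤ 1 → ∀ r : ℤ,
      Summable (fun r' : ℤ => |rwKernel r' r * chebFun r' x|) ∧
      HasSum (fun r' : ℤ => rwKernel r' r * chebFun r' x)
        (Real.exp (-(1 - x) / 2) * chebFun r x)) := by
  refine ⟨fun r r' => rwKernel_nonneg r' r, hasSum_rwKernel, rwKernel_add_eq_sub,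
    hasSum_sq_mul_rwKernel, fun x hx₁ hx₂ r => ?_⟩
  have h := hasSum_rwKernel_mul_chebFun hx₁ hx₂ r
  exact ⟨h.summable.abs, h⟩

end Paper
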